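/- Let q be an odd prime power, n coprime to q, and let C_a ⊆ F_q^{2n} be the double negacirculant code generated as an R-module by (1, a(x)) in R^2, where R = F_q[x]/⟨x^n + 1⟩. Then C_a is LCD (i.e. C_a ∩ C_a^⊥ = {0} for the Euclidean inner product) if and only if gcd(1 + a(x)·a(-x^{n-1}), x^n + 1) = 1 in F_q[x]. -/

import Mathlib

/-! In `R = F[x]/⟨x^n+1⟩` the root `x` is a unit with `x⁻¹ = -x^(n-1)`, so `x ↦ x⁻¹` extends
to an algebra endomorphism `σ` of `R`. Since `x^i σ(x^j) = ±x^k` with `k ≡ i - j (mod n)`, the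
coefficient inner product is `⟨f, g⟩ = [x^0] (f σ(g))`. Hence `⟨(r, ra), (s, sa)⟩ = ⟨r u, s⟩`
with `u = 1 + a σ(a)`, and by nondegeneracy `C_a ∩ C_a^⊥ = 0` says exactly that `u` is a
nonzerodivisor of the finite dimensional, hence artinian, algebra `R`, i.e. a unit, i.e. coprime
to `x^n + 1`. -/

open Polynomial

lemma X_pow_add_one_ne_zero (F : Type*) [Field F] {n : ℕ} (hn : 0 < n) :
    (X ^ n + 1 : F[X]) ≠ 0 := by
  have h : (X ^ n + 1 : F[X]) = X ^ n + C 1 := by simp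
  intro hzero
  have := natDegree_X_pow_add_C (n := n) (r := (1 : F))
  rw [← h, hzero] at this
  simp at this
  omega

/-- The Euclidean inner product on `F_q[x]/⟨f⟩` given by coefficientwise expansion
in the power basis `1, x, …, x^{deg f - 1}`. -/
noncomputable def iprod {F : Type*} [Field F] {f : F[X]} (hf : f ≠ 0)
    (x y : AdjoinRoot f) : F :=
  ((AdjoinRoot.powerBasis hf).basis.repr x).sum
    fun i c => c * ((AdjoinRoot.powerBasis hf).basis.repr y) i

open nonZeroDivisors

theorem Module.Basis.toDual_apply_eq_sum {ι R M : Type*} [Fintype ι] [DecidableEq ι]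
    [CommSemiring R] [AddCommMonoid M] [Module R M] (b : Module.Basis ι R M) (x y : M) :
    b.toDual x y = (b.repr x).sum fun i c => c * b.repr y i := by
  rw [Finsupp.sum_fintype _ _ fun _ => zero_mul _]
  conv_lhs => rw [← b.sum_repr x]
  simp only [map_sum, map_smul, LinearMap.sum_apply, LinearMap.smul_apply,
    b.toDual_apply_right, smul_eq_mul]

namespace AdjoinRoot

theorem isUnit_mk_iff_isCoprime {R : Type*} [CommRing R] {f p : R[X]} :
    IsUnit (mk f p) ↔ IsCoprime p f := by
  rw [isUnit_iff_exists_inv]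
  constructor
  · rintro ⟨v, hv⟩
    obtain ⟨q, rfl⟩ := mk_surjective v
    rw [← map_mul, ← map_one (mk f), ← sub_eq_zero, ← map_sub, mk_eq_zero] at hv
    obtain ⟨k, hk⟩ := hv
    exact ⟨q, -k, by linear_combination hk⟩
  · rintro ⟨q, k, h⟩
    refine ⟨mk f q, ?_⟩
    rw [← map_mul, ← map_one (mk f), ← h, map_add, map_mul _ k f, mk_self, mul_zero, add_zero,
      mul_comm]

theorem mk_mem_nonZeroDivisors_iff_isCoprime {K : Type*} [Field K] {f : K[X]} (hf : f ≠ 0)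
    {p : K[X]} : mk f p ∈ (AdjoinRoot f)⁰ ↔ IsCoprime p f := by
  have := (powerBasis hf).finite
  have := IsArtinianRing.of_finite K (AdjoinRoot f)
  rw [← IsArtinianRing.isUnit_iff_mem_nonZeroDivisors, isUnit_mk_iff_isCoprime]

end AdjoinRoot

section
variable {K : Type*} [Field K] {f : K[X]}

theorem iprod_eq_toDual (hf : f ≠ 0) (x y : AdjoinRoot f) :
    iprod hf x y = (AdjoinRoot.powerBasis hf).basis.toDual x y :=
  ((AdjoinRoot.powerBasis hf).basis.toDual_apply_eq_sum x y).symm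

theorem forall_iprod_eq_zero_iff (hf : f ≠ 0) {x : AdjoinRoot f} :
    (∀ y, iprod hf x y = 0) ↔ x = 0 := by
  refine ⟨fun h => (AdjoinRoot.powerBasis hf).basis.toDual_injective ?_, fun h y => ?_⟩
  · ext y
    simpa [iprod_eq_toDual] using h y
  · simp [h, iprod_eq_toDual]

end

namespace Negacyclic

variable {F : Type*} [Field F] {n : ℕ}

local notation "𝓡" => AdjoinRoot (X ^ n + 1 : F[X])
local notation "ζ" => AdjoinRoot.root (X ^ n + 1 : F[X])

theorem root_pow : ζ ^ n = -1 := by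
  have h := AdjoinRoot.mk_self (f := (X ^ n + 1 : F[X]))
  rw [map_add, map_pow, AdjoinRoot.mk_X, map_one] at h
  exact eq_neg_of_add_eq_zero_left h

theorem neg_root_pow_pred_pow (hn : 0 < n) : (-ζ ^ (n - 1)) ^ n = -1 := by
  rw [neg_pow, ← pow_mul', pow_mul, root_pow, ← pow_add, Odd.neg_one_pow ⟨n - 1, by omega⟩]

noncomputable def conj (hn : 0 < n) : 𝓡 →ₐ[F] 𝓡 :=
  AdjoinRoot.liftAlgHom _ (Algebra.ofId F 𝓡) (-ζ ^ (n - 1)) (by simp [neg_root_pow_pred_pow hn])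

theorem conj_root (hn : 0 < n) : conj hn ζ = -ζ ^ (n - 1) :=
  AdjoinRoot.liftAlgHom_root ..

theorem conj_root_mul_root (hn : 0 < n) : conj hn ζ * ζ = 1 := by
  rw [conj_root, neg_mul, ← pow_succ, Nat.sub_add_cancel hn, root_pow, neg_neg]

theorem conj_root_pow (hn : 0 < n) {k : ℕ} (hk : k ≤ n) : conj hn ζ ^ k = -ζ ^ (n - k) := by
  refine left_inv_eq_right_inv (a := ζ ^ k) ?_ ?_
  · rw [← mul_pow, conj_root_mul_root, one_pow]
  · rw [mul_neg, ← pow_add, Nat.add_sub_cancel' hk, root_pow, neg_neg]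

theorem conj_mk (hn : 0 < n) (p : F[X]) :
    conj hn (AdjoinRoot.mk _ p) = AdjoinRoot.mk _ (p.comp (-X ^ (n - 1))) := by
  rw [← AdjoinRoot.aeval_eq, ← AdjoinRoot.aeval_eq, ← Polynomial.aeval_algHom_apply, aeval_comp]
  simp [conj_root]

theorem natDegree_X_pow_add_one : (X ^ n + 1 : F[X]).natDegree = n := by
  simpa using natDegree_X_pow_add_C (n := n) (r := (1 : F))

theorem powerBasis_dim (hn : 0 < n) :
    (AdjoinRoot.powerBasis (X_pow_add_one_ne_zero F hn)).dim = n := by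
  rw [AdjoinRoot.powerBasis_dim, natDegree_X_pow_add_one]

noncomputable def coeffZero (hn : 0 < n) : 𝓡 →ₗ[F] F :=
  (AdjoinRoot.powerBasis (X_pow_add_one_ne_zero F hn)).basis.coord
    ⟨0, (powerBasis_dim (F := F) hn).symm ▸ hn⟩

theorem coeffZero_root_pow (hn : 0 < n) {k : ℕ} (hk : k < n) :
    coeffZero hn (ζ ^ k) = if k = 0 then 1 else 0 := by
  have hb : ζ ^ k = (AdjoinRoot.powerBasis (X_pow_add_one_ne_zero F hn)).basis
      ⟨k, (powerBasis_dim (F := F) hn).symm ▸ hk⟩ := by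
    rw [PowerBasis.basis_eq_pow, AdjoinRoot.powerBasis_gen]
  rw [hb, coeffZero, Module.Basis.coord_apply, Module.Basis.repr_self, Finsupp.single_apply]
  simp [Fin.ext_iff]

theorem coeffZero_root_pow_mul_conj_root_pow (hn : 0 < n) {i j : ℕ} (hi : i < n) (hj : j < n) :
    coeffZero hn (ζ ^ i * conj hn ζ ^ j) = if i = j then 1 else 0 := by
  rcases le_or_gt j i with hji | hij
  · obtain ⟨d, rfl⟩ := Nat.exists_eq_add_of_le hji
    rw [show ζ ^ (j + d) * conj hn ζ ^ j = ζ ^ d * (conj hn ζ * ζ) ^ j by ring,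
      conj_root_mul_root, one_pow, mul_one, coeffZero_root_pow hn (by omega)]
    exact if_congr (by omega) rfl rfl
  · obtain ⟨d, rfl⟩ := Nat.exists_eq_add_of_lt hij
    rw [show ζ ^ i * conj hn ζ ^ (i + d + 1) = conj hn ζ ^ (d + 1) * (conj hn ζ * ζ) ^ i by ring,
      conj_root_mul_root, one_pow, mul_one, conj_root_pow hn (by omega), map_neg,
      coeffZero_root_pow hn (by omega), if_neg (by omega), if_neg (by omega), neg_zero]

theorem iprod_eq_coeffZero_mul_conj (hn : 0 < n) (x y : 𝓡) :
    iprod (X_pow_add_one_ne_zero F hn) x y = coeffZero hn (x * conj hn y) := by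
  set b := (AdjoinRoot.powerBasis (X_pow_add_one_ne_zero F hn)).basis
  have h : b.toDual = ((LinearMap.mul F 𝓡).compl₂ (conj hn).toLinearMap).compr₂ (coeffZero hn) := by
    refine LinearMap.ext_basis b b fun i j => ?_
    have hi : (i : ℕ) < n := i.2.trans_eq (powerBasis_dim hn)
    have hj : (j : ℕ) < n := j.2.trans_eq (powerBasis_dim hn)
    rw [b.toDual_apply]
    simp only [LinearMap.compr₂_apply, LinearMap.compl₂_apply,
      LinearMap.mul_apply', AlgHom.toLinearMap_apply, b, PowerBasis.basis_eq_pow,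
      AdjoinRoot.powerBasis_gen, map_pow, coeffZero_root_pow_mul_conj_root_pow hn hi hj,
      Fin.ext_iff]
  rw [iprod_eq_toDual, h]
  rfl

theorem iprod_add_iprod_mul_mul (hn : 0 < n) (A r s : 𝓡) :
    iprod (X_pow_add_one_ne_zero F hn) r s + iprod (X_pow_add_one_ne_zero F hn) (r * A) (s * A)
      = iprod (X_pow_add_one_ne_zero F hn) (r * (1 + A * conj hn A)) s := by
  simp only [iprod_eq_coeffZero_mul_conj hn, map_mul (conj hn), ← map_add]
  ring_nf

end Negacyclic

theorem stmt_10_general (n : ℕ) (hn : 0 < n) (F : Type*) [Field F] (a : F[X]) :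
    (∀ v : AdjoinRoot (X ^ n + 1 : F[X]) × AdjoinRoot (X ^ n + 1 : F[X]),
        (∃ r, v = (r, r * AdjoinRoot.mk (X ^ n + 1 : F[X]) a)) →
        (∀ w : AdjoinRoot (X ^ n + 1 : F[X]) × AdjoinRoot (X ^ n + 1 : F[X]),
          (∃ r, w = (r, r * AdjoinRoot.mk (X ^ n + 1 : F[X]) a)) →
          iprod (X_pow_add_one_ne_zero F hn) v.1 w.1
            + iprod (X_pow_add_one_ne_zero F hn) v.2 w.2 = 0) →
        v = 0)
      ↔ IsCoprime (1 + a * a.comp (-(X ^ (n - 1)))) (X ^ n + 1 : F[X]) := by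
  set A := AdjoinRoot.mk (X ^ n + 1 : F[X]) a
  have hu : AdjoinRoot.mk _ (1 + a * a.comp (-(X ^ (n - 1)))) = 1 + A * Negacyclic.conj hn A := by
    rw [map_add, map_one, map_mul, Negacyclic.conj_mk]
  rw [← AdjoinRoot.mk_mem_nonZeroDivisors_iff_isCoprime (X_pow_add_one_ne_zero F hn), hu,
    mem_nonZeroDivisors_iff_right]
  simp only [forall_exists_index, forall_eq_apply_imp_iff, Negacyclic.iprod_add_iprod_mul_mul hn,
    forall_iprod_eq_zero_iff, Prod.mk_eq_zero]
  exact forall₂_congr fun r _ => and_iff_left_of_imp fun h => by rw [h, zero_mul]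

/-- Characterization of LCD double negacirculant codes: with `R = F_q[x]/⟨x^n+1⟩`,
`q` odd, `gcd(n,q) = 1`, the code `C_a = {(f, f·a) : f ∈ R} ⊆ F_q^{2n}` is LCD
(trivial intersection with its Euclidean dual) iff
`gcd(1 + a(x)·a(-x^{n-1}), x^n + 1) = 1`. -/
theorem stmt_10 (q n : ℕ) (hq : Odd q) (hn : 0 < n) (hco : Nat.Coprime n q)
    (F : Type*) [Field F] [Fintype F] (hF : Fintype.card F = q) (a : F[X]) :
    (∀ v : AdjoinRoot (X ^ n + 1 : F[X]) × AdjoinRoot (X ^ n + 1 : F[X]),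
        (∃ r, v = (r, r * AdjoinRoot.mk (X ^ n + 1 : F[X]) a)) →
        (∀ w : AdjoinRoot (X ^ n + 1 : F[X]) × AdjoinRoot (X ^ n + 1 : F[X]),
          (∃ r, w = (r, r * AdjoinRoot.mk (X ^ n + 1 : F[X]) a)) →
          iprod (X_pow_add_one_ne_zero F hn) v.1 w.1
            + iprod (X_pow_add_one_ne_zero F hn) v.2 w.2 = 0) →
        v = 0)
      ↔ IsCoprime (1 + a * a.comp (-(X ^ (n - 1)))) (X ^ n + 1 : F[X]) :=
  stmt_10_general n hn F a
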